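/- arXiv:math/0409434 — 4 statements merged into one kernel-verified Lean document; each statement's English description precedes it below -/
import Mathlib

section
/- For r ≥ 3 and C > 0, the function ũ(z) = (r²(r−2)|z|^{2/r} + C)^{−1/(r−2)} on the punctured unit disc belongs to the weighted Sobolev space L^p₁ (with weight |z|^{−q p}, q = 1/r, i.e., ∫_{B₁}(|ũ|^p + |∂ũ|^p + |∂̄ũ|^p)|z|^{−p/r} < ∞) if and only if p < 2/(1 − 1/r). -/
/-!
`ũ(z) = φ(|z|)` with `φ(s) = (A s^{2/r} + C)^ν`, `A = r²(r−2)`, `ν = −1/(r−2)`, is radial, so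
`∂ũ = φ'(|z|) z̄ / (2|z|)` and `∂̄ũ = φ'(|z|) z / (2|z|)` both have modulus `|φ'(|z|)|/2`.
On the unit disc `φ` is bounded while `|φ'(s)| ≍ s^{2/r − 1}` blows up at `0`, so the integrand
is comparable to `|z|^{(2/r − 1)p − p/r} = |z|^{−p(1 − 1/r)}`, which is integrable near the
origin of the plane exactly when the exponent exceeds `−2`.
-/

open MeasureTheory

/-- The Wirtinger operator `∂ = (∂_x − i ∂_y)/2`. -/
noncomputable def dzOp (f : ℂ → ℂ) (z : ℂ) : ℂ :=
  (fderiv ℝ f z 1 - Complex.I * fderiv ℝ f z Complex.I) / 2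

/-- The Wirtinger operator `∂̄ = (∂_x + i ∂_y)/2`. -/
noncomputable def dbarOp (f : ℂ → ℂ) (z : ℂ) : ℂ :=
  (fderiv ℝ f z 1 + Complex.I * fderiv ℝ f z Complex.I) / 2

open Complex ComplexConjugate

section
variable {α : Type*} [MeasurableSpace α] {μ : Measure α} {s : Set α} {f g : α → ℝ} {c₁ c₂ : ℝ}

theorem integrableOn_iff_of_ae_le_of_ae_le (hc₁ : 0 < c₁)
    (hf : AEStronglyMeasurable f (μ.restrict s)) (hg : AEStronglyMeasurable g (μ.restrict s))
    (hg₀ : ∀ᵐ x ∂μ.restrict s, 0 ≤ g x) (hlow : ∀ᵐ x ∂μ.restrict s, c₁ * g x ≤ f x)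
    (hup : ∀ᵐ x ∂μ.restrict s, f x ≤ c₂ * g x) :
    IntegrableOn f s μ ↔ IntegrableOn g s μ := by
  constructor
  · intro hfi
    refine (hfi.const_mul c₁⁻¹).mono' hg ?_
    filter_upwards [hg₀, hlow] with x hx₀ hx
    rw [Real.norm_of_nonneg hx₀, le_inv_mul_iff₀ hc₁]
    exact hx
  · intro hgi
    refine (hgi.const_mul c₂).mono' hf ?_
    filter_upwards [hg₀, hlow, hup] with x hx₀ hxl hxu
    rw [Real.norm_of_nonneg (le_trans (by positivity) hxl)]
    exact hxu
end

section
variable {E : Type*} [NormedAddCommGroup E] [NormedSpace ℝ E] [FiniteDimensional ℝ E]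
  [Nontrivial E] [MeasurableSpace E] [BorelSpace E] (μ : Measure E) [μ.IsAddHaarMeasure]

theorem integrableOn_ball_norm_rpow_iff {R t : ℝ} (hR : 0 < R) :
    IntegrableOn (fun x : E => ‖x‖ ^ t) (Metric.ball 0 R) μ ↔
      -(Module.finrank ℝ E : ℝ) < t := by
  rw [integrableOn_fun_norm_addHaar μ (f := fun y => y ^ t)]
  have hd : 1 ≤ Module.finrank ℝ E := Module.finrank_pos
  have heq : Set.EqOn (fun y : ℝ => y ^ (Module.finrank ℝ E - 1) • y ^ t)
      (fun y => y ^ (t + (Module.finrank ℝ E - 1 : ℝ))) (Set.Ioo 0 R) := by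
    intro y hy
    dsimp only
    rw [smul_eq_mul, Real.rpow_add hy.1, ← Real.rpow_natCast, Nat.cast_sub hd, Nat.cast_one,
      mul_comm]
  rw [integrableOn_congr_fun heq measurableSet_Ioo, intervalIntegral.integrableOn_Ioo_rpow_iff hR]
  constructor <;> intro h <;> linarith
end

section Radial

variable {φ : ℝ → ℝ} {φ' : ℝ} {z : ℂ}

theorem hasFDerivAt_ofReal_comp_norm (hz : z ≠ 0) (hφ : HasDerivAt φ φ' ‖z‖) :
    HasFDerivAt (fun w : ℂ => (φ ‖w‖ : ℂ)) (ofRealCLM.comp ((φ' / ‖z‖) • innerSL ℝ z)) z := by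
  have hz' : 0 < ‖z‖ := norm_pos_iff.mpr hz
  have hnorm : HasFDerivAt (‖·‖) (‖z‖⁻¹ • innerSL ℝ z) z := by
    have hsqrt := (Real.hasDerivAt_sqrt (pow_pos hz' 2).ne').comp_hasFDerivAt z
      (hasStrictFDerivAt_norm_sq z).hasFDerivAt
    simp only [Function.comp_def, Real.sqrt_sq (norm_nonneg _)] at hsqrt
    refine hsqrt.congr_fderiv ?_
    ext w
    simp only [one_div, mul_inv_rev, smul_apply, coe_innerSL_apply,
      Complex.inner, mul_re, conj_re, conj_im, mul_neg, sub_neg_eq_add, smul_add, nsmul_eq_mul,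
      Nat.cast_ofNat, smul_eq_mul]
    ring
  refine (ofRealCLM.hasFDerivAt.comp z (hφ.comp_hasFDerivAt z hnorm)).congr_fderiv ?_
  rw [smul_smul, div_eq_mul_inv]

theorem dzOp_ofReal_comp_norm (hz : z ≠ 0) (hφ : HasDerivAt φ φ' ‖z‖) :
    dzOp (fun w : ℂ => (φ ‖w‖ : ℂ)) z = φ' / ‖z‖ * conj z / 2 := by
  rw [dzOp, (hasFDerivAt_ofReal_comp_norm hz hφ).fderiv]
  apply Complex.ext <;> simp [Complex.inner]

theorem dbarOp_ofReal_comp_norm (hz : z ≠ 0) (hφ : HasDerivAt φ φ' ‖z‖) :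
    dbarOp (fun w : ℂ => (φ ‖w‖ : ℂ)) z = φ' / ‖z‖ * z / 2 := by
  rw [dbarOp, (hasFDerivAt_ofReal_comp_norm hz hφ).fderiv]
  apply Complex.ext <;> simp [Complex.inner]

theorem norm_dzOp_ofReal_comp_norm (hz : z ≠ 0) (hφ : HasDerivAt φ φ' ‖z‖) :
    ‖dzOp (fun w : ℂ => (φ ‖w‖ : ℂ)) z‖ = |φ'| / 2 := by
  rw [dzOp_ofReal_comp_norm hz hφ]
  simp [norm_ne_zero_iff.mpr hz]

theorem norm_dbarOp_ofReal_comp_norm (hz : z ≠ 0) (hφ : HasDerivAt φ φ' ‖z‖) :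
    ‖dbarOp (fun w : ℂ => (φ ‖w‖ : ℂ)) z‖ = |φ'| / 2 := by
  rw [dbarOp_ofReal_comp_norm hz hφ]
  simp [norm_ne_zero_iff.mpr hz]

end Radial

theorem weightedIntegrand_ofReal_comp_norm_ae_eq {φ φ' : ℝ → ℝ}
    (hφ : ∀ s, 0 < s → HasDerivAt φ (φ' s) s) (p w : ℝ) :
    (fun z => (‖(φ ‖z‖ : ℂ)‖ ^ p + ‖dzOp (fun w : ℂ => (φ ‖w‖ : ℂ)) z‖ ^ p
        + ‖dbarOp (fun w : ℂ => (φ ‖w‖ : ℂ)) z‖ ^ p) * ‖z‖ ^ w)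
      =ᵐ[volume] fun z => (|φ ‖z‖| ^ p + 2 * (|φ' ‖z‖| / 2) ^ p) * ‖z‖ ^ w := by
  filter_upwards [Measure.ae_ne volume 0] with z hz
  have hφz := hφ ‖z‖ (norm_pos_iff.mpr hz)
  rw [norm_dzOp_ofReal_comp_norm hz hφz, norm_dbarOp_ofReal_comp_norm hz hφz, Complex.norm_real,
    Real.norm_eq_abs]
  ring

section
variable {A C e ν s : ℝ}

theorem hasDerivAt_rpow_mul_rpow_add (hA : 0 ≤ A) (hC : 0 < C) (hs : 0 < s) :
    HasDerivAt (fun s => (A * s ^ e + C) ^ ν)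
      (ν * (A * s ^ e + C) ^ (ν - 1) * (A * (e * s ^ (e - 1)))) s := by
  have hpos : 0 < A * s ^ e + C := by positivity
  exact (Real.hasDerivAt_rpow_const (Or.inl hpos.ne')).comp s
    (((Real.hasDerivAt_rpow_const (Or.inl hs.ne')).const_mul A).add_const C)

theorem abs_rpow_mul_rpow_add_le (hA : 0 ≤ A) (hC : 0 < C) (hν : ν ≤ 0) (hs : 0 ≤ s) :
    |(A * s ^ e + C) ^ ν| ≤ C ^ ν := by
  rw [abs_of_nonneg (by positivity)]
  exact Real.rpow_le_rpow_of_nonpos hC (le_add_of_nonneg_left (by positivity)) hν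

theorem abs_deriv_rpow_mul_rpow_add_bounds (hA : 0 ≤ A) (hC : 0 < C) (he : 0 ≤ e) (hν : ν ≤ 1)
    (hs : 0 < s) (hs1 : s ≤ 1) :
    |ν| * A * e * (A + C) ^ (ν - 1) * s ^ (e - 1)
        ≤ |ν * (A * s ^ e + C) ^ (ν - 1) * (A * (e * s ^ (e - 1)))| ∧
      |ν * (A * s ^ e + C) ^ (ν - 1) * (A * (e * s ^ (e - 1)))|
        ≤ |ν| * A * e * C ^ (ν - 1) * s ^ (e - 1) := by
  have hB : 0 < A * s ^ e + C := by positivity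
  have habs : |ν * (A * s ^ e + C) ^ (ν - 1) * (A * (e * s ^ (e - 1)))|
      = |ν| * A * e * (A * s ^ e + C) ^ (ν - 1) * s ^ (e - 1) := by
    rw [abs_mul, abs_mul, abs_of_nonneg (by positivity : 0 ≤ (A * s ^ e + C) ^ (ν - 1)),
      abs_of_nonneg (by positivity : 0 ≤ A * (e * s ^ (e - 1)))]
    ring
  have hse : s ^ e ≤ 1 := Real.rpow_le_one hs.le hs1 he
  rw [habs]
  constructor
  · gcongr |ν| * A * e * ?_ * _
    exact Real.rpow_le_rpow_of_nonpos hB (by nlinarith) (by linarith : ν - 1 ≤ 0)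
  · gcongr |ν| * A * e * ?_ * _
    exact Real.rpow_le_rpow_of_nonpos hC (le_add_of_nonneg_left (by positivity))
      (by linarith : ν - 1 ≤ 0)

theorem exists_weightedIntegrand_bounds {p : ℝ} (hA : 0 < A) (hC : 0 < C) (he : 0 < e)
    (he1 : e ≤ 1) (hν : ν < 0) (hp : 0 ≤ p) (w : ℝ) :
    ∃ c₁ c₂ : ℝ, 0 < c₁ ∧ ∀ s ∈ Set.Ioc (0 : ℝ) 1,
      c₁ * s ^ ((e - 1) * p + w)
          ≤ (|(A * s ^ e + C) ^ ν| ^ p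
            + 2 * (|ν * (A * s ^ e + C) ^ (ν - 1) * (A * (e * s ^ (e - 1)))| / 2) ^ p) * s ^ w ∧
        (|(A * s ^ e + C) ^ ν| ^ p
            + 2 * (|ν * (A * s ^ e + C) ^ (ν - 1) * (A * (e * s ^ (e - 1)))| / 2) ^ p) * s ^ w
          ≤ c₂ * s ^ ((e - 1) * p + w) := by
  set d₁ := |ν| * A * e * (A + C) ^ (ν - 1)
  set d₂ := |ν| * A * e * C ^ (ν - 1)
  have hd₁ : 0 < d₁ := by have := abs_pos.mpr hν.ne; positivity
  refine ⟨2 * (d₁ / 2) ^ p, (C ^ ν) ^ p + 2 * (d₂ / 2) ^ p, by positivity, ?_⟩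
  rintro s ⟨hs, hs1⟩
  obtain ⟨hlow, hup⟩ := abs_deriv_rpow_mul_rpow_add_bounds (e := e) (ν := ν) hA.le hC he.le
    (by linarith) hs hs1
  set y := |ν * (A * s ^ e + C) ^ (ν - 1) * (A * (e * s ^ (e - 1)))|
  have hscale : ∀ d, 0 ≤ d → (d * s ^ (e - 1) / 2) ^ p = (d / 2) ^ p * s ^ ((e - 1) * p) := by
    intro d hd
    rw [mul_div_right_comm, Real.mul_rpow (by positivity) (by positivity),
      ← Real.rpow_mul hs.le]
  have hsplit : s ^ ((e - 1) * p + w) = s ^ ((e - 1) * p) * s ^ w := Real.rpow_add hs _ _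
  have hweight : s ^ w ≤ s ^ ((e - 1) * p + w) :=
    Real.rpow_le_rpow_of_exponent_ge hs hs1 (by nlinarith)
  have hy₁ : (d₁ / 2) ^ p * s ^ ((e - 1) * p) ≤ (y / 2) ^ p := by
    rw [← hscale d₁ hd₁.le]
    gcongr
  have hy₂ : (y / 2) ^ p ≤ (d₂ / 2) ^ p * s ^ ((e - 1) * p) := by
    rw [← hscale d₂ (by positivity)]
    gcongr
  have hx : |(A * s ^ e + C) ^ ν| ^ p ≤ (C ^ ν) ^ p := by
    gcongr
    exact abs_rpow_mul_rpow_add_le hA.le hC hν.le hs.le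
  constructor
  · calc 2 * (d₁ / 2) ^ p * s ^ ((e - 1) * p + w)
        = 2 * ((d₁ / 2) ^ p * s ^ ((e - 1) * p)) * s ^ w := by rw [hsplit]; ring
      _ ≤ 2 * (y / 2) ^ p * s ^ w := by gcongr
      _ ≤ _ := by gcongr; exact le_add_of_nonneg_left (by positivity)
  · calc _ ≤ ((C ^ ν) ^ p + 2 * ((d₂ / 2) ^ p * s ^ ((e - 1) * p))) * s ^ w := by gcongr
      _ = (C ^ ν) ^ p * s ^ w + 2 * (d₂ / 2) ^ p * s ^ ((e - 1) * p + w) := by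
        rw [hsplit]; ring
      _ ≤ _ := by rw [add_mul]; gcongr
end

/-- The local solution `ũ(z) = (r²(r−2)|z|^{2/r} + C)^{−1/(r−2)}` lies in the weighted
Sobolev space `L^p₁` on the unit disc, with weight `|z|^{−p/r}` (`q = 1/r`), if and only
if `p < 2/(1 − 1/r)`. -/
theorem Ar_local_solution_weighted_Lp1 (r : ℕ) (hr : 3 ≤ r) (C : ℝ) (hC : 0 < C)
    (p : ℝ) (hp : 1 ≤ p) (u : ℂ → ℂ)
    (hu : u = fun z => ((((r : ℝ) ^ 2 * ((r : ℝ) - 2) * ‖z‖ ^ ((2 : ℝ) / r) + C)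
      ^ (-(1 : ℝ) / ((r : ℝ) - 2)) : ℝ) : ℂ)) :
    IntegrableOn
      (fun z => (‖u z‖ ^ p + ‖dzOp u z‖ ^ p
          + ‖dbarOp u z‖ ^ p) * ‖z‖ ^ (-(p / (r : ℝ))))
      (Metric.ball (0 : ℂ) 1)
    ↔ p < 2 / (1 - 1 / (r : ℝ)) := by
  have hr' : (3 : ℝ) ≤ r := by exact_mod_cast hr
  set A : ℝ := (r : ℝ) ^ 2 * ((r : ℝ) - 2)
  set e : ℝ := 2 / r
  set ν : ℝ := -1 / ((r : ℝ) - 2)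
  have hA : 0 < A := mul_pos (by positivity) (by linarith)
  have he : 0 < e := by positivity
  have he1 : e ≤ 1 := (div_le_one (by positivity)).mpr (by linarith)
  have hν : ν < 0 := div_neg_of_neg_of_pos (by norm_num) (by linarith : (0 : ℝ) < r - 2)
  subst hu
  rw [integrableOn_congr_fun_ae (ae_restrict_of_ae (weightedIntegrand_ofReal_comp_norm_ae_eq
    (fun s hs => hasDerivAt_rpow_mul_rpow_add (e := e) (ν := ν) hA.le hC hs) p _))]
  obtain ⟨c₁, c₂, hc₁, hbounds⟩ :=
    exists_weightedIntegrand_bounds (p := p) hA hC he he1 hν (by linarith) (-(p / r))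
  have hnorm : ∀ᵐ z ∂(volume.restrict (Metric.ball (0 : ℂ) 1)), ‖z‖ ∈ Set.Ioc 0 1 := by
    filter_upwards [ae_restrict_mem measurableSet_ball,
      ae_restrict_of_ae (Measure.ae_ne volume 0)] with z hz hz0
    exact ⟨norm_pos_iff.mpr hz0, (mem_ball_zero_iff.mp hz).le⟩
  rw [integrableOn_iff_of_ae_le_of_ae_le (g := fun z : ℂ => ‖z‖ ^ ((e - 1) * p + -(p / r))) hc₁
    (by fun_prop) (Measurable.aestronglyMeasurable (by fun_prop))
    (.of_forall fun z => by positivity)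
    (by filter_upwards [hnorm] with z hz using (hbounds _ hz).1)
    (by filter_upwards [hnorm] with z hz using (hbounds _ hz).2),
    integrableOn_ball_norm_rpow_iff volume one_pos, Complex.finrank_real_complex]
  have hexp : (e - 1) * p + -(p / r) = -(p * (1 - 1 / r)) := by ring
  rw [hexp, lt_div_iff₀ (by rw [sub_pos, div_lt_one (by positivity)]; linarith)]
  push_cast
  exact neg_lt_neg_iff
end

section
/- Let W ∈ ℂ[x₁,…,x_n] be a non-degenerate quasi-homogeneous polynomial with all weights qᵢ < 1. Then there is a constant C depending only on W such that for every (u₁,…,u_n) ∈ ℂⁿ and every i, |uᵢ| ≤ C (Σ_{j=1}^n |∂W/∂x_j (u₁,…,u_n)| + 1)^{δᵢ}, where δᵢ = qᵢ / min_j(1 − q_j). -/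
/-!
Write `u = l ·ₖ v`, i.e. `uᵢ = l ^ kᵢ vᵢ`, with `l = maxᵢ |uᵢ| ^ (1 / kᵢ)` and `v` on the unit
sphere of the sup norm. Differentiating the quasi-homogeneity relation gives
`∂ⱼW(u) = l ^ (d - kⱼ) ∂ⱼW(v)`, and by non-degeneracy `∑ⱼ |∂ⱼW|` has a positive minimum `m` on
the compact sphere. So for `l ≥ 1` the gradient sum at `u` is at least `m l ^ (d ε)` with
`ε = minⱼ (1 - qⱼ)`, while `|uᵢ| ≤ l ^ kᵢ = (l ^ (d ε)) ^ δᵢ`; for `l < 1` the bound is trivial.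
-/

open MvPolynomial

section WeightedScaling

variable {σ τ R : Type*}

theorem MvPolynomial.eval_bind₁ [CommSemiring R] (f : σ → MvPolynomial τ R) (p : MvPolynomial σ R)
    (x : τ → R) : eval x (bind₁ f p) = eval (fun i => eval x (f i)) p :=
  eval₂Hom_bind₁ _ _ _ _

theorem MvPolynomial.pderiv_bind₁_C_mul_X [CommSemiring R] (c : σ → R) (j : σ)
    (p : MvPolynomial σ R) :
    pderiv j (bind₁ (fun i => C (c i) * X i) p)
      = C (c j) * bind₁ (fun i => C (c i) * X i) (pderiv j p) := by
  induction p using MvPolynomial.induction_on with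
  | C a => simp
  | add p q hp hq => simp only [map_add, hp, hq, mul_add]
  | mul_X p i hp =>
    obtain rfl | h := eq_or_ne i j
    · simp [hp]
      ring
    · simp [hp, pderiv_X_of_ne h]
      ring

variable [CommRing R] [IsDomain R] [Infinite R]

theorem pow_mul_eval_pderiv_of_quasiHomogeneous {k : σ → ℕ} {d : ℕ} {W : MvPolynomial σ R}
    (hW : ∀ l : R, l ≠ 0 → ∀ x : σ → R, eval (fun i => l ^ k i * x i) W = l ^ d * eval x W)
    {l : R} (hl : l ≠ 0) (j : σ) (x : σ → R) :
    l ^ k j * eval (fun i => l ^ k i * x i) (pderiv j W) = l ^ d * eval x (pderiv j W) := by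
  -- over an infinite domain the relation is a polynomial identity, so it can be differentiated
  have hWpoly : bind₁ (fun i => C (l ^ k i) * X i) W = C (l ^ d) * W :=
    MvPolynomial.funext fun y => by simpa [eval_bind₁] using hW l hl y
  have := congrArg (fun p => eval x (pderiv j p)) hWpoly
  simpa only [pderiv_bind₁_C_mul_X, pderiv_C_mul, map_mul, eval_C, eval_bind₁, eval_X] using this

end WeightedScaling

section WeightedPolar

variable {ι 𝕜 : Type*} [RCLike 𝕜]

theorem exists_weighted_polar_decomposition [Fintype ι] [Nonempty ι] {k : ι → ℕ}
    (hk : ∀ i, 0 < k i) (u : ι → 𝕜) :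
    ∃ l : ℝ, 0 ≤ l ∧ ∃ v : ι → 𝕜, ‖v‖ = 1 ∧ u = fun i => (l : 𝕜) ^ k i * v i := by
  set l := Finset.univ.sup' Finset.univ_nonempty fun i => ‖u i‖ ^ (k i : ℝ)⁻¹
  have hroot_le : ∀ i, ‖u i‖ ^ (k i : ℝ)⁻¹ ≤ l := fun i =>
    Finset.le_sup' (fun i => ‖u i‖ ^ (k i : ℝ)⁻¹) (Finset.mem_univ i)
  have hl : 0 ≤ l := (Real.rpow_nonneg (norm_nonneg _) _).trans
    (hroot_le (Classical.arbitrary ι))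
  have hu_le : ∀ i, ‖u i‖ ≤ l ^ k i := fun i => by
    calc ‖u i‖ = (‖u i‖ ^ (k i : ℝ)⁻¹) ^ k i :=
          (Real.rpow_inv_natCast_pow (norm_nonneg _) (hk i).ne').symm
      _ ≤ l ^ k i := pow_le_pow_left₀ (Real.rpow_nonneg (norm_nonneg _) _) (hroot_le i) _
  obtain ⟨i₀, -, hi₀⟩ := Finset.exists_mem_eq_sup' Finset.univ_nonempty
    fun i => ‖u i‖ ^ (k i : ℝ)⁻¹
  have hu_eq : ‖u i₀‖ = l ^ k i₀ := by
    rw [show l = _ from hi₀, Real.rpow_inv_natCast_pow (norm_nonneg _) (hk i₀).ne']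
  refine ⟨l, hl, ?_⟩
  clear_value l
  obtain rfl | hl_pos := hl.eq_or_lt
  · refine ⟨fun _ => 1, by simp [pi_norm_const], funext fun i => ?_⟩
    simpa [zero_pow (hk i).ne'] using (hu_le i).trans_eq (zero_pow (hk i).ne')
  have hlk : ∀ i, ((l : 𝕜) ^ k i) ≠ 0 := fun i =>
    pow_ne_zero _ (RCLike.ofReal_ne_zero.2 hl_pos.ne')
  refine ⟨fun i => u i / (l : 𝕜) ^ k i, ?_, funext fun i => (mul_div_cancel₀ _ (hlk i)).symm⟩
  have hv_norm : ∀ i, ‖u i / (l : 𝕜) ^ k i‖ = ‖u i‖ / l ^ k i := fun i => by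
    rw [norm_div, norm_pow, RCLike.norm_ofReal, abs_of_pos hl_pos]
  refine le_antisymm ((pi_norm_le_iff_of_nonneg zero_le_one).2 fun i => ?_) ?_
  · rw [hv_norm, div_le_one (by positivity)]
    exact hu_le i
  · calc (1 : ℝ) = ‖u i₀ / (l : 𝕜) ^ k i₀‖ := by
          rw [hv_norm, hu_eq, div_self (by positivity)]
      _ ≤ _ := norm_le_pi_norm (fun i => u i / (l : 𝕜) ^ k i) i₀

theorem norm_ofReal_pow_mul_le {l : ℝ} (hl : 0 ≤ l) (n : ℕ) {z : 𝕜} (hz : ‖z‖ ≤ 1) :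
    ‖(l : 𝕜) ^ n * z‖ ≤ l ^ n := by
  rw [norm_mul, norm_pow, RCLike.norm_ofReal, abs_of_nonneg hl]
  exact mul_le_of_le_one_right (by positivity) hz

end WeightedPolar

section GradientGrowth

variable {ι 𝕜 : Type*} [RCLike 𝕜] {k : ι → ℕ} {d : ℕ} {W : MvPolynomial ι 𝕜}

theorem norm_eval_pderiv_weighted_of_quasiHomogeneous (hW : ∀ l : 𝕜, l ≠ 0 → ∀ x : ι → 𝕜,
      eval (fun i => l ^ k i * x i) W = l ^ d * eval x W)
    {j : ι} (hkd : k j ≤ d) {l : ℝ} (hl : 0 < l) (v : ι → 𝕜) :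
    ‖eval (fun i => (l : 𝕜) ^ k i * v i) (pderiv j W)‖ = l ^ (d - k j) * ‖eval v (pderiv j W)‖ := by
  have hl' : (l : 𝕜) ≠ 0 := RCLike.ofReal_ne_zero.2 hl.ne'
  have h := pow_mul_eval_pderiv_of_quasiHomogeneous hW hl' j v
  rw [← Nat.sub_add_cancel hkd, pow_add, mul_comm ((l : 𝕜) ^ (d - k j)), mul_assoc] at h
  rw [mul_left_cancel₀ (pow_ne_zero _ hl') h, norm_mul, norm_pow, RCLike.norm_ofReal,
    abs_of_pos hl]

theorem rpow_mul_sum_norm_eval_pderiv_le [Fintype ι] (hW : ∀ l : 𝕜, l ≠ 0 → ∀ x : ι → 𝕜,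
      eval (fun i => l ^ k i * x i) W = l ^ d * eval x W)
    (hkd : ∀ j, k j ≤ d) {l : ℝ} (hl : 1 ≤ l) {e : ℝ} (he : ∀ j, e ≤ d - k j) (v : ι → 𝕜) :
    l ^ e * ∑ j, ‖eval v (pderiv j W)‖
      ≤ ∑ j, ‖eval (fun i => (l : 𝕜) ^ k i * v i) (pderiv j W)‖ := by
  rw [Finset.mul_sum]
  refine Finset.sum_le_sum fun j _ => ?_
  rw [norm_eval_pderiv_weighted_of_quasiHomogeneous hW (hkd j) (zero_lt_one.trans_le hl)]
  gcongr
  calc l ^ e ≤ l ^ ((d - k j : ℕ) : ℝ) := by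
        gcongr
        rw [Nat.cast_sub (hkd j)]
        exact he j
    _ = l ^ (d - k j) := Real.rpow_natCast l _

theorem exists_pos_le_sum_norm_eval_pderiv_of_norm_eq_one [Fintype ι]
    (hnd : ∀ u : ι → 𝕜, (∀ j, eval u (pderiv j W) = 0) → u = 0) :
    ∃ m > 0, ∀ v : ι → 𝕜, ‖v‖ = 1 → m ≤ ∑ j, ‖eval v (pderiv j W)‖ := by
  have hpos : ∀ v ∈ Metric.sphere (0 : ι → 𝕜) 1, 0 < ∑ j, ‖eval v (pderiv j W)‖ := by
    intro v hv
    refine (Finset.sum_nonneg fun j _ => norm_nonneg _).lt_of_ne' fun hsum => ?_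
    refine ne_zero_of_mem_unit_sphere ⟨v, hv⟩ (hnd v fun j => norm_eq_zero.1 ?_)
    exact (Finset.sum_eq_zero_iff_of_nonneg fun j _ => norm_nonneg _).1 hsum j (Finset.mem_univ j)
  obtain ⟨m, hm, hm_le⟩ := (isCompact_sphere (0 : ι → 𝕜) 1).exists_forall_le'
    (continuous_finsetSum _ fun j _ => (continuous_eval _).norm).continuousOn hpos
  exact ⟨m, hm, fun v hv => hm_le v (mem_sphere_zero_iff_norm.2 hv)⟩

end GradientGrowth

theorem le_inv_rpow_mul_add_one_rpow {x a m G δ D : ℝ} (ha : 0 ≤ a) (hm : 0 < m) (hm1 : m ≤ 1)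
    (hG : 0 ≤ G) (hδ : 0 ≤ δ) (hδD : δ ≤ D) (hx : x ≤ a ^ δ) (haG : 1 ≤ a → a * m ≤ G) :
    x ≤ m⁻¹ ^ D * (G + 1) ^ δ := by
  have hm_inv : 1 ≤ m⁻¹ := one_le_inv₀ hm |>.2 hm1
  refine hx.trans ?_
  rcases lt_or_ge a 1 with ha1 | ha1
  · calc a ^ δ ≤ 1 := Real.rpow_le_one ha ha1.le hδ
      _ ≤ m⁻¹ ^ D * (G + 1) ^ δ := one_le_mul_of_one_le_of_one_le
          (Real.one_le_rpow hm_inv (hδ.trans hδD)) (Real.one_le_rpow (by linarith) hδ)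
  · calc a ^ δ ≤ (m⁻¹ * (G + 1)) ^ δ := by
          gcongr
          rw [inv_mul_eq_div, le_div_iff₀ hm]
          linarith [haG ha1]
      _ = m⁻¹ ^ δ * (G + 1) ^ δ := Real.mul_rpow (by positivity) (by linarith)
      _ ≤ m⁻¹ ^ D * (G + 1) ^ δ := by gcongr

theorem pointwise_bound_by_gradient_general (n d : ℕ) (hn : 0 < n)
    (k : Fin n → ℕ) (hk : ∀ i, 0 < k i) (hkd : ∀ i, k i < d)
    (W : MvPolynomial (Fin n) ℂ)
    (hW : ∀ l : ℂ, l ≠ 0 → ∀ x : Fin n → ℂ,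
      eval (fun i => l ^ k i * x i) W = l ^ d * eval x W)
    (hnd : ∀ u : Fin n → ℂ, (∀ j, eval u (pderiv j W) = 0) → u = 0) :
    ∃ C : ℝ, 0 < C ∧ ∀ (u : Fin n → ℂ) (i : Fin n),
      ‖u i‖ ≤ C * (∑ j, ‖eval u (pderiv j W)‖ + 1)
        ^ (((k i : ℝ) / d) /
            (Finset.univ.inf' ⟨⟨0, hn⟩, Finset.mem_univ _⟩ fun j => 1 - (k j : ℝ) / d)) := by
  have : Nonempty (Fin n) := ⟨⟨0, hn⟩⟩
  have hd : (0 : ℝ) < d := by exact_mod_cast (hk ⟨0, hn⟩).trans (hkd ⟨0, hn⟩)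
  have hq : ∀ j, (k j : ℝ) / d < 1 := fun j => (div_lt_one hd).2 (by exact_mod_cast hkd j)
  set ε := Finset.univ.inf' ⟨⟨0, hn⟩, Finset.mem_univ _⟩ fun j => 1 - (k j : ℝ) / d
  have hε : 0 < ε := (Finset.lt_inf'_iff _).2 fun j _ => sub_pos.2 (hq j)
  have hdε : ∀ j, d * ε ≤ d - k j := fun j => by
    calc d * ε ≤ d * (1 - k j / d) := by gcongr; exact Finset.inf'_le _ (Finset.mem_univ j)
      _ = d - k j := by field_simp
  obtain ⟨m, hm, hm_le⟩ := exists_pos_le_sum_norm_eval_pderiv_of_norm_eq_one hnd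
  refine ⟨(min m 1)⁻¹ ^ ε⁻¹, by positivity, fun u i => ?_⟩
  obtain ⟨l, hl, v, hv, rfl⟩ := exists_weighted_polar_decomposition hk u
  refine le_inv_rpow_mul_add_one_rpow (a := l ^ (d * ε)) (by positivity) (lt_min hm one_pos)
    (min_le_right _ _) (by positivity) (by positivity) ?_ ?_ fun ha => ?_
  · exact (div_le_div_of_nonneg_right (hq i).le hε.le).trans_eq (one_div ε)
  · calc ‖(l : ℂ) ^ k i * v i‖ ≤ l ^ k i := norm_ofReal_pow_mul_le hl _ (hv ▸ norm_le_pi_norm v i)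
      _ = (l ^ (d * ε)) ^ ((k i : ℝ) / d / ε) := by
          rw [← Real.rpow_mul hl, ← Real.rpow_natCast]
          field_simp
  · have hl1 : 1 ≤ l := le_of_not_gt fun hl1 => (Real.rpow_lt_one hl hl1 (by positivity)).not_ge ha
    calc l ^ (d * ε) * min m 1 ≤ l ^ (d * ε) * ∑ j, ‖eval v (pderiv j W)‖ := by
          gcongr
          exact (min_le_left _ _).trans (hm_le v hv)
      _ ≤ _ := rpow_mul_sum_norm_eval_pderiv_le hW (fun j => (hkd j).le) hl1 hdε v

/-- For a non-degenerate quasi-homogeneous polynomial `W` with weights `qᵢ = kᵢ/d < 1`,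
there is a constant `C` depending only on `W` such that
`|uᵢ| ≤ C (∑ⱼ |∂W/∂xⱼ(u)| + 1)^{δᵢ}` for all `u ∈ ℂⁿ`, where
`δᵢ = qᵢ / minⱼ(1 − qⱼ)`. -/
theorem pointwise_bound_by_gradient (n d : ℕ) (hn : 0 < n) (hd : 0 < d)
    (k : Fin n → ℕ) (hk : ∀ i, 0 < k i) (hkd : ∀ i, k i < d)
    (W : MvPolynomial (Fin n) ℂ)
    (hW : ∀ l : ℂ, l ≠ 0 → ∀ x : Fin n → ℂ,
      eval (fun i => l ^ k i * x i) W = l ^ d * eval x W)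
    (hnd : ∀ u : Fin n → ℂ, (∀ j, eval u (pderiv j W) = 0) → u = 0) :
    ∃ C : ℝ, 0 < C ∧ ∀ (u : Fin n → ℂ) (i : Fin n),
      ‖u i‖ ≤ C * (∑ j, ‖eval u (pderiv j W)‖ + 1)
        ^ (((k i : ℝ) / d) /
            (Finset.univ.inf' ⟨⟨0, hn⟩, Finset.mem_univ _⟩ fun j => 1 - (k j : ℝ) / d)) :=
  pointwise_bound_by_gradient_general n d hn k hk hkd W hW hnd
end

section
/- Let W ∈ ℂ[x₁,…,x_n] be non-degenerate quasi-homogeneous with weights qᵢ ∈ (0,1), assign xᵢ weight qᵢ and sᵢ weight 1−qᵢ. Then for each i there exists a nonzero quasi-homogeneous polynomial pᵢ(xᵢ) ∈ ℂ[s₁,…,s_n][xᵢ], monic up to a nonzero constant in xᵢ (its leading coefficient in xᵢ is a nonzero constant independent of s₁,…,s_n), such that whenever (u₁,…,u_n) ∈ ℂⁿ satisfies ∂W/∂x_j(u₁,…,u_n) = s_j for all j, then pᵢ(uᵢ) = 0 (with s_j substituted). -/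
/-!
Since `W` is weighted homogeneous of degree `d`, its partial derivatives `f j` are weighted
homogeneous of the positive weights `d - k j`. By the Nullstellensatz their only common zero is
the origin, so every `X i` is nilpotent modulo `(f)`; a graded Nakayama argument then shows that
`ℂ[x]` is a finite module over `ℂ[s]` acting through `s j ↦ f j`. Hence `X i` satisfies a monic
equation `P(X i) = 0` with coefficients in `ℂ[s]`. Keeping from `P` only its part of total weight
`natDegree P * k i` (with `X` of weight `k i` and `s j` of weight `d - k j`) preserves both the
equation and monicity, and makes `P` quasi-homogeneous.
-/

open MvPolynomial

theorem Finsupp.finite_setOf_forall_lt {σ : Type*} [Finite σ] (N : σ → ℕ) :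
    {e : σ →₀ ℕ | ∀ i, e i < N i}.Finite := by
  classical
  refine (Set.finite_Iic (Finsupp.equivFunOnFinite.symm N)).subset fun e he => ?_
  exact Finsupp.le_def.mpr fun i => by simpa using (he i).le

namespace MvPolynomial

variable {R σ τ : Type*}

section CommSemiring

variable [CommSemiring R] {w : σ → ℕ} {w' : τ → ℕ}

theorem IsWeightedHomogeneous.eval_pow_mul {φ : MvPolynomial σ R} {m : ℕ}
    (hφ : IsWeightedHomogeneous w φ m) (l : R) (x : σ → R) :
    eval (fun i => l ^ w i * x i) φ = l ^ m * eval x φ := by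
  induction hφ using IsWeightedHomogeneous.induction_on with
  | zero => simp
  | add p q _ _ hp hq => rw [map_add, map_add, hp, hq, mul_add]
  | monomial d r hr =>
    simp only [eval_monomial, ← hr, Finsupp.weight_apply, Finsupp.prod, Finsupp.sum, smul_eq_mul,
      mul_pow, ← pow_mul, Finset.prod_mul_distrib, ← Finset.prod_pow_eq_pow_sum, mul_comm (w _)]
    ring

theorem IsWeightedHomogeneous.aeval {φ : MvPolynomial τ R} {m : ℕ}
    (hφ : IsWeightedHomogeneous w' φ m) {f : τ → MvPolynomial σ R}
    (hf : ∀ j, IsWeightedHomogeneous w (f j) (w' j)) :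
    IsWeightedHomogeneous w (aeval f φ) m := by
  induction hφ using IsWeightedHomogeneous.induction_on with
  | zero => simpa using isWeightedHomogeneous_zero R w m
  | add p q _ _ hp hq => simpa using hp.add hq
  | monomial d r hr =>
    rw [aeval_monomial, ← hr, Finsupp.weight_apply, algebraMap_eq, ← zero_add (d.sum _)]
    exact (isWeightedHomogeneous_C w r).mul
      (IsWeightedHomogeneous.prod _ _ _ fun j _ => (hf j).pow (d j))

theorem weightedHomogeneousComponent_aeval {f : τ → MvPolynomial σ R}
    (hf : ∀ j, IsWeightedHomogeneous w (f j) (w' j)) (b : ℕ) (g : MvPolynomial τ R) :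
    weightedHomogeneousComponent w b (aeval f g) =
      aeval f (weightedHomogeneousComponent w' b g) := by
  induction g using MvPolynomial.induction_on' with
  | monomial d r =>
    have hd := isWeightedHomogeneous_monomial w' d r rfl
    obtain rfl | hb := eq_or_ne (Finsupp.weight w' d) b
    · rw [(hd.aeval hf).weightedHomogeneousComponent_same, hd.weightedHomogeneousComponent_same]
    · rw [(hd.aeval hf).weightedHomogeneousComponent_ne b hb.symm,
        hd.weightedHomogeneousComponent_ne b hb.symm, map_zero]
  | add p q hp hq => rw [map_add, map_add, hp, hq, map_add, map_add]

theorem weightedHomogeneousComponent_mul_of_isWeightedHomogeneous {F : MvPolynomial σ R}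
    {a : ℕ} (hF : IsWeightedHomogeneous w F a) (t : ℕ) (g : MvPolynomial σ R) :
    weightedHomogeneousComponent w t (g * F) =
      if a ≤ t then weightedHomogeneousComponent w (t - a) g * F else 0 := by
  induction g using MvPolynomial.induction_on' with
  | monomial d r =>
    have hd := isWeightedHomogeneous_monomial w d r rfl
    by_cases ht : Finsupp.weight w d + a = t
    · subst ht
      rw [(hd.mul hF).weightedHomogeneousComponent_same, if_pos (Nat.le_add_left _ _),
        Nat.add_sub_cancel, hd.weightedHomogeneousComponent_same]
    · rw [(hd.mul hF).weightedHomogeneousComponent_ne t (Ne.symm ht)]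
      split_ifs with hat
      · rw [hd.weightedHomogeneousComponent_ne _ (by omega), zero_mul]
      · rfl
  | add p q hp hq =>
    rw [add_mul, map_add, hp, hq]
    split_ifs <;> simp [add_mul]

theorem sum_range_weightedHomogeneousComponent (φ : MvPolynomial σ R) :
    ∑ b ∈ Finset.range (weightedTotalDegree w φ + 1), weightedHomogeneousComponent w b φ = φ := by
  rw [← finsum_eq_sum_of_support_subset, sum_weightedHomogeneousComponent]
  intro b hb
  by_contra h
  simp only [Finset.coe_range, Set.mem_Iio, Nat.lt_succ_iff, not_le] at h
  exact hb (weightedHomogeneousComponent_eq_zero b φ h)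

theorem monomial_mem_of_X_pow_mem {I : Ideal (MvPolynomial σ R)} {i : σ} {N : ℕ}
    (hN : X i ^ N ∈ I) {e : σ →₀ ℕ} {r : R} (he : N ≤ e i) : monomial e r ∈ I := by
  rw [← tsub_add_cancel_of_le (Finsupp.single_le_iff.mpr he), ← mul_one r, ← monomial_mul,
    ← X_pow_eq_monomial]
  exact I.mul_mem_left _ hN

end CommSemiring

theorem isWeightedHomogeneous_of_eval_pow_mul [CommRing R] [IsDomain R] [Infinite R]
    {w : σ → ℕ} {φ : MvPolynomial σ R} {m : ℕ}
    (h : ∀ l : R, l ≠ 0 → ∀ x : σ → R, eval (fun i => l ^ w i * x i) φ = l ^ m * eval x φ) :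
    IsWeightedHomogeneous w φ m := by
  set T := weightedTotalDegree w φ
  have hcomp : ∀ b ≠ m, weightedHomogeneousComponent w b φ = 0 := by
    intro b hb
    refine MvPolynomial.funext fun x => ?_
    -- the scaling identity, read as a polynomial identity in `l`
    let Q : Polynomial R := ∑ c ∈ Finset.range (T + 1),
      Polynomial.C (eval x (weightedHomogeneousComponent w c φ)) * Polynomial.X ^ c
    have hQ : Q = Polynomial.C (eval x φ) * Polynomial.X ^ m := by
      refine Polynomial.eq_of_infinite_eval_eq _ _
        ((Set.finite_singleton 0).infinite_compl.mono fun l hl => ?_)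
      simp only [Q, Set.mem_ofPred_eq, Polynomial.eval_finsetSum, Polynomial.eval_mul,
        Polynomial.eval_C, Polynomial.eval_pow, Polynomial.eval_X]
      rw [mul_comm, ← h l hl x]
      conv_rhs => rw [← sum_range_weightedHomogeneousComponent (w := w) φ]
      rw [map_sum]
      refine Finset.sum_congr rfl fun c _ => ?_
      rw [(weightedHomogeneousComponent_isWeightedHomogeneous c φ).eval_pow_mul, mul_comm]
    have hb' := congrArg (Polynomial.coeff · b) hQ
    simp only [Q, Polynomial.finsetSum_coeff, Polynomial.coeff_C_mul_X_pow, hb, if_false,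
      Finset.sum_ite_eq, Finset.mem_range] at hb'
    rw [map_zero]
    split_ifs at hb' with hbT
    · exact hb'
    · rw [weightedHomogeneousComponent_eq_zero b φ (by omega), map_zero]
  rw [← sum_range_weightedHomogeneousComponent (w := w) φ]
  refine IsWeightedHomogeneous.sum _ _ _ fun b _ => ?_
  obtain rfl | hb := eq_or_ne b m
  · exact weightedHomogeneousComponent_isWeightedHomogeneous b φ
  · rw [hcomp b hb]
    exact isWeightedHomogeneous_zero R w m

theorem X_mem_radical_span_of_forall_eval_eq_zero {K ι : Type*} [Field K] [IsAlgClosed K]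
    [Finite σ] {f : ι → MvPolynomial σ K} (h : ∀ u : σ → K, (∀ j, eval u (f j) = 0) → u = 0)
    (i : σ) : X i ∈ (Ideal.span (Set.range f)).radical := by
  rw [← vanishingIdeal_zeroLocus_eq_radical (K := K), mem_vanishingIdeal_iff]
  intro u hu
  rw [mem_zeroLocus_iff] at hu
  rw [h u fun j => hu _ (Ideal.subset_span (Set.mem_range_self j)), aeval_X]
  rfl

/-- Graded Nakayama: the monomials with all exponents `e i < N i`, where `X i ^ N i ∈ (f)`, span.
By induction on the weight, a larger monomial lies in `(f)`, and taking its weight component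
writes it as a combination of the `f j` with coefficients of strictly smaller weight. -/
theorem finite_aeval_of_X_mem_radical [CommRing R] [Finite σ] [Fintype τ] {w : σ → ℕ}
    {w' : τ → ℕ} (hw' : ∀ j, 0 < w' j) {f : τ → MvPolynomial σ R}
    (hf : ∀ j, IsWeightedHomogeneous w (f j) (w' j))
    (hX : ∀ i, X i ∈ (Ideal.span (Set.range f)).radical) :
    (aeval f : MvPolynomial τ R →ₐ[R] MvPolynomial σ R).toRingHom.Finite := by
  choose N hN using hX
  let := (aeval f : MvPolynomial τ R →ₐ[R] MvPolynomial σ R).toRingHom.toAlgebra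
  have hsmul (g : MvPolynomial τ R) (φ : MvPolynomial σ R) : g • φ = aeval f g * φ := rfl
  let G : Set (MvPolynomial σ R) := (fun e => monomial e 1) '' {e | ∀ i, e i < N i}
  let S := Submodule.span (MvPolynomial τ R) G
  have hG : G.Finite := (Finsupp.finite_setOf_forall_lt N).image _
  have hmonomial (e : σ →₀ ℕ) (r : R) (he : monomial e 1 ∈ S) : monomial e r ∈ S := by
    simpa [hsmul, C_mul_monomial] using S.smul_mem (C r) he
  have hhom (t : ℕ) (φ : MvPolynomial σ R) (hφ : IsWeightedHomogeneous w φ t) : φ ∈ S := by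
    induction t using Nat.strong_induction_on generalizing φ with
    | _ t IH =>
    induction hφ using IsWeightedHomogeneous.induction_on with
    | zero => exact S.zero_mem
    | add p q _ _ hp hq => exact S.add_mem hp hq
    | monomial e r he =>
      refine hmonomial e r ?_
      by_cases hsmall : ∀ i, e i < N i
      · exact Submodule.subset_span ⟨e, hsmall, rfl⟩
      obtain ⟨i, hi⟩ := not_forall.mp hsmall
      obtain ⟨g, hg⟩ := Ideal.mem_span_range_iff_exists_fun.mp
        (monomial_mem_of_X_pow_mem (hN i) (r := 1) (not_lt.mp hi))
      rw [← (isWeightedHomogeneous_monomial w e 1 he).weightedHomogeneousComponent_same, ← hg,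
        map_sum]
      refine S.sum_mem fun j _ => ?_
      rw [weightedHomogeneousComponent_mul_of_isWeightedHomogeneous (hf j)]
      split_ifs with hjt
      · rw [mul_comm, ← aeval_X (R := R) f j, ← hsmul]
        exact S.smul_mem _ (IH _ (by have := hw' j; omega) _
          (weightedHomogeneousComponent_isWeightedHomogeneous _ _))
      · exact S.zero_mem
  have hS : S = ⊤ := by
    refine eq_top_iff.mpr fun φ _ => ?_
    rw [← sum_range_weightedHomogeneousComponent (w := w) φ]
    exact S.sum_mem fun b _ => hhom b _ (weightedHomogeneousComponent_isWeightedHomogeneous b φ)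
  exact ⟨Submodule.fg_def.mpr ⟨G, hG, hS⟩⟩

end MvPolynomial

namespace Polynomial

variable {R σ τ : Type*} [CommSemiring R]

/-- The part of `P` of total weight `t` when `X` has weight `a`; meaningful only when
`P.natDegree * a ≤ t`, because of the truncated subtraction `t - e * a`. -/
noncomputable def weightedHomogenize (w' : τ → ℕ) (a t : ℕ) (P : (MvPolynomial τ R)[X]) :
    (MvPolynomial τ R)[X] :=
  P.sum fun e c => monomial e (weightedHomogeneousComponent w' (t - e * a) c)

variable {w' : τ → ℕ} {a t : ℕ} {P : (MvPolynomial τ R)[X]}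

theorem coeff_weightedHomogenize (e : ℕ) :
    (P.weightedHomogenize w' a t).coeff e =
      weightedHomogeneousComponent w' (t - e * a) (P.coeff e) := by
  simp +contextual [weightedHomogenize, Polynomial.sum_def, Polynomial.coeff_monomial]

theorem isWeightedHomogeneous_coeff_weightedHomogenize (e : ℕ) :
    IsWeightedHomogeneous w' ((P.weightedHomogenize w' a t).coeff e) (t - e * a) := by
  rw [coeff_weightedHomogenize]
  exact weightedHomogeneousComponent_isWeightedHomogeneous _ _

theorem natDegree_weightedHomogenize_le :
    (P.weightedHomogenize w' a t).natDegree ≤ P.natDegree :=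
  natDegree_le_iff_coeff_eq_zero.mpr fun e he => by
    rw [coeff_weightedHomogenize, coeff_eq_zero_of_natDegree_lt he, map_zero]

theorem Monic.weightedHomogenize (hP : P.Monic) :
    (P.weightedHomogenize w' a (P.natDegree * a)).Monic := by
  refine monic_of_natDegree_le_of_coeff_eq_one _ natDegree_weightedHomogenize_le ?_
  rw [coeff_weightedHomogenize, hP.coeff_natDegree, Nat.sub_self,
    (isWeightedHomogeneous_one R w').weightedHomogeneousComponent_same]

theorem eval₂_weightedHomogenize {w : σ → ℕ} {f : τ → MvPolynomial σ R}
    (hf : ∀ j, IsWeightedHomogeneous w (f j) (w' j)) {y : MvPolynomial σ R}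
    (hy : IsWeightedHomogeneous w y a) (ht : P.natDegree * a ≤ t) :
    (P.weightedHomogenize w' a t).eval₂ (MvPolynomial.aeval f).toRingHom y =
      weightedHomogeneousComponent w t (P.eval₂ (MvPolynomial.aeval f).toRingHom y) := by
  rw [eval₂_eq_sum_range' _ (Nat.lt_succ_of_le natDegree_weightedHomogenize_le),
    eval₂_eq_sum_range, map_sum]
  refine Finset.sum_congr rfl fun e he => ?_
  have hea : e * a ≤ t :=
    (Nat.mul_le_mul_right a (Nat.lt_succ_iff.mp (Finset.mem_range.mp he))).trans ht
  rw [weightedHomogeneousComponent_mul_of_isWeightedHomogeneous (by simpa using hy.pow e),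
    if_pos hea, coeff_weightedHomogenize]
  exact congrArg (· * y ^ e) (weightedHomogeneousComponent_aeval hf _ _).symm

theorem eval_pow_mul_map_eval {p : (MvPolynomial τ R)[X]}
    (hp : ∀ e, IsWeightedHomogeneous w' (p.coeff e) (t - e * a)) (ht : p.natDegree * a ≤ t)
    (l x : R) (s : τ → R) :
    (p.map (MvPolynomial.eval fun j => l ^ w' j * s j)).eval (l ^ a * x) =
      l ^ t * (p.map (MvPolynomial.eval s)).eval x := by
  rw [eval_map, eval_map, eval₂_eq_sum_range, eval₂_eq_sum_range, Finset.mul_sum]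
  refine Finset.sum_congr rfl fun e he => ?_
  have hea : e * a ≤ t :=
    (Nat.mul_le_mul_right a (Nat.lt_succ_iff.mp (Finset.mem_range.mp he))).trans ht
  obtain ⟨r, rfl⟩ := Nat.exists_eq_add_of_le hea
  rw [(hp e).eval_pow_mul, Nat.add_sub_cancel_left]
  ring

theorem eval_map_eval_eq_eval_eval₂_aeval (f : τ → MvPolynomial σ R) (u : σ → R)
    (y : MvPolynomial σ R) (p : (MvPolynomial τ R)[X]) :
    (p.map (MvPolynomial.eval fun j => MvPolynomial.eval u (f j))).eval (MvPolynomial.eval u y) =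
      MvPolynomial.eval u (p.eval₂ (MvPolynomial.aeval f).toRingHom y) := by
  rw [hom_eval₂, eval_map]
  congr 1
  ext <;> simp

end Polynomial

theorem elimination_polynomial_exists_general (n d : ℕ)
    (k : Fin n → ℕ) (hkd : ∀ i, k i < d)
    (W : MvPolynomial (Fin n) ℂ)
    (hW : ∀ l : ℂ, l ≠ 0 → ∀ x : Fin n → ℂ,
      eval (fun i => l ^ k i * x i) W = l ^ d * eval x W)
    (hnd : ∀ u : Fin n → ℂ, (∀ j, eval u (pderiv j W) = 0) → u = 0)
    (i : Fin n) :
    ∃ p : Polynomial (MvPolynomial (Fin n) ℂ), ∃ c : ℂ, c ≠ 0 ∧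
      p.leadingCoeff = MvPolynomial.C c ∧
      (∃ m : ℕ, ∀ l : ℂ, l ≠ 0 → ∀ (x : ℂ) (s : Fin n → ℂ),
        Polynomial.eval (l ^ k i * x)
            (p.map (MvPolynomial.eval fun j => l ^ (d - k j) * s j))
          = l ^ m * Polynomial.eval x (p.map (MvPolynomial.eval s))) ∧
      ∀ u : Fin n → ℂ,
        Polynomial.eval (u i)
          (p.map (MvPolynomial.eval fun j => eval u (pderiv j W))) = 0 := by
  have hWd : IsWeightedHomogeneous k W d := isWeightedHomogeneous_of_eval_pow_mul hW
  have hf (j : Fin n) : IsWeightedHomogeneous k (pderiv j W) (d - k j) :=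
    hWd.pderiv (Nat.sub_add_cancel (hkd j).le)
  have hfinite := finite_aeval_of_X_mem_radical (fun j => Nat.sub_pos_of_lt (hkd j)) hf
    (X_mem_radical_span_of_forall_eval_eq_zero hnd)
  obtain ⟨P, hPmonic, hPi⟩ := hfinite.to_isIntegral (X i)
  set p := P.weightedHomogenize (fun j => d - k j) (k i) (P.natDegree * k i)
  refine ⟨p, 1, one_ne_zero, by rw [hPmonic.weightedHomogenize.leadingCoeff, C_1],
    ⟨P.natDegree * k i, fun l _ x s => ?_⟩, fun u => ?_⟩
  · exact Polynomial.eval_pow_mul_map_eval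
      Polynomial.isWeightedHomogeneous_coeff_weightedHomogenize
      (Nat.mul_le_mul_right _ Polynomial.natDegree_weightedHomogenize_le) l x s
  · rw [← eval_X (f := u) i, Polynomial.eval_map_eval_eq_eval_eval₂_aeval,
      Polynomial.eval₂_weightedHomogenize hf (isWeightedHomogeneous_X ℂ k i) le_rfl, hPi,
      map_zero, map_zero]

/-- Elimination polynomial: for a non-degenerate quasi-homogeneous `W` with weights
`qᵢ = kᵢ/d ∈ (0,1)` and each `i`, there is a nonzero polynomial
`pᵢ ∈ ℂ[s₁,…,s_n][xᵢ]`, quasi-homogeneous (with `xᵢ` of weight `qᵢ` and `sⱼ` of weight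
`1 − qⱼ`) and with leading coefficient in `xᵢ` a nonzero constant, such that whenever
`∂W/∂xⱼ(u) = sⱼ` for all `j`, then `pᵢ(uᵢ) = 0` (with the `sⱼ` substituted). -/
theorem elimination_polynomial_exists (n d : ℕ) (hn : 0 < n) (hd : 0 < d)
    (k : Fin n → ℕ) (hk : ∀ i, 0 < k i) (hkd : ∀ i, k i < d)
    (W : MvPolynomial (Fin n) ℂ)
    (hW : ∀ l : ℂ, l ≠ 0 → ∀ x : Fin n → ℂ,
      eval (fun i => l ^ k i * x i) W = l ^ d * eval x W)
    (hnd : ∀ u : Fin n → ℂ, (∀ j, eval u (pderiv j W) = 0) → u = 0)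
    (i : Fin n) :
    ∃ p : Polynomial (MvPolynomial (Fin n) ℂ), ∃ c : ℂ, c ≠ 0 ∧
      p.leadingCoeff = MvPolynomial.C c ∧
      (∃ m : ℕ, ∀ l : ℂ, l ≠ 0 → ∀ (x : ℂ) (s : Fin n → ℂ),
        Polynomial.eval (l ^ k i * x)
            (p.map (MvPolynomial.eval fun j => l ^ (d - k j) * s j))
          = l ^ m * Polynomial.eval x (p.map (MvPolynomial.eval s))) ∧
      ∀ u : Fin n → ℂ,
        Polynomial.eval (u i)
          (p.map (MvPolynomial.eval fun j => eval u (pderiv j W))) = 0 :=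
  elimination_polynomial_exists_general n d k hkd W hW hnd i
end

section
/- Let W be quasi-homogeneous with weights qᵢ and let φ₁,…,φ_t be smooth solutions of ∂̄φ_j + conj(∂W/∂x_j(φ)) = 0 on an open set Ω ⊆ ℂ. Then the function N(z) = Σᵢ qᵢ |φᵢ(z)|² satisfies ΔN = Σᵢ 8(1−qᵢ)|∂W/∂xᵢ(φ)|² + Σᵢ 4qᵢ(|∂_z φᵢ|² + |∂_z̄ φᵢ|²); in particular N is subharmonic on Ω. -/
open MvPolynomial

theorem evalHasFDerivAt {t : ℕ} (P : MvPolynomial (Fin t) ℂ) (x : Fin t → ℂ) :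
    HasFDerivAt (fun y : Fin t → ℂ => eval y P)
      (∑ i, eval x (pderiv i P) • (ContinuousLinearMap.proj i :
        (Fin t → ℂ) →L[ℂ] ℂ)) x := by
  induction P using MvPolynomial.induction_on with
  | C a =>
      convert hasFDerivAt_const (𝕜 := ℂ) a x using 1
      · ext y; simp
      · ext v; simp
      · simp only [pderiv_C, map_zero]
        exact Finset.sum_eq_zero fun i _ =>
          ContinuousLinearMap.ext fun v => show (0:ℂ) * v i = 0 from zero_mul _
  | add p q hp hq =>
      have heq : (fun y : Fin t → ℂ => eval y (p + q))
          = fun y : Fin t → ℂ => eval y p + eval y q := by ext y; simp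
      rw [heq]
      refine (hp.add hq).congr_fderiv ?_
      ext v
      simp only [ContinuousLinearMap.add_apply, ContinuousLinearMap.coe_sum',
        Finset.sum_apply, ContinuousLinearMap.smul_apply, smul_eq_mul, map_add,
        ContinuousLinearMap.proj_apply]
      rw [← Finset.sum_add_distrib]
      exact Finset.sum_congr rfl fun j _ => by ring
  | mul_X p i hp =>
      have h2 : HasFDerivAt (fun y : Fin t → ℂ => y i)
        (ContinuousLinearMap.proj i : (Fin t → ℂ) →L[ℂ] ℂ) x := hasFDerivAt_apply i x
      have h3 := hp.mul' h2
      have heq : (fun y : Fin t → ℂ => eval y (p * X i))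
          = fun y : Fin t → ℂ => eval y p * y i := by
        ext y; simp
      rw [heq]
      refine h3.congr_fderiv ?_
      ext v
      have hsingle : ∀ j : Fin t,
          eval x (Pi.single (M := fun _ => MvPolynomial (Fin t) ℂ) j 1 i)
            = if j = i then 1 else 0 := by
        intro j
        rcases eq_or_ne j i with h | h
        · subst h; simp
        · simp [Pi.single_eq_of_ne (Ne.symm h), h]
      simp only [ContinuousLinearMap.add_apply, ContinuousLinearMap.coe_sum',
        Finset.sum_apply, ContinuousLinearMap.smul_apply, smul_eq_mul,
        ContinuousLinearMap.proj_apply, ContinuousLinearMap.smulRight_apply,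
        pderiv_mul, pderiv_X, map_add, eval_mul, eval_add, eval_X, hsingle]
      refine Eq.symm ?_
      calc ∑ j, (eval x (pderiv j p) * x i + eval x p * (if j = i then 1 else 0)) * v j
          = ∑ j, (eval x (pderiv j p) * x i * v j + if j = i then eval x p * v j else 0) :=
            Finset.sum_congr rfl fun j _ => by split <;> ring
        _ = (∑ j, eval x (pderiv j p) * x i * v j) + eval x p * v i := by
            rw [Finset.sum_add_distrib, Finset.sum_ite_eq' Finset.univ i
              (fun j => eval x p * v j)]
            simp
        _ = eval x p * v i + (∑ j, eval x (pderiv j p) * v j) * x i := by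
            rw [add_comm, Finset.sum_mul]
            congr 1
            exact Finset.sum_congr rfl fun j _ => by ring

/-- Real chain rule for polynomial eval along curves in `ℂᵗ`. -/
theorem evalCompHasFDerivAt {t : ℕ} (P : MvPolynomial (Fin t) ℂ)
    {φ : Fin t → ℂ → ℂ} {L : Fin t → ℂ →L[ℝ] ℂ} {w : ℂ}
    (hφ : ∀ j, HasFDerivAt (φ j) (L j) w) :
    HasFDerivAt (fun w => eval (fun j => φ j w) P)
      (∑ j, eval (fun j => φ j w) (pderiv j P) • L j) w := by
  have h1 := (evalHasFDerivAt P (fun j => φ j w)).restrictScalars ℝ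
  have h2 : HasFDerivAt (fun w => (fun j => φ j w))
      (ContinuousLinearMap.pi L) w := hasFDerivAt_pi.2 hφ
  have h3 := h1.comp w h2
  refine h3.congr_fderiv ?_
  ext v
  simp [ContinuousLinearMap.smul_apply, Finset.sum_apply]

/-- Euler identity (evaluated form) for quasi-homogeneous polynomials. -/
theorem eulerEval {t d : ℕ} {k : Fin t → ℕ} {W : MvPolynomial (Fin t) ℂ}
    (hW : ∀ l : ℂ, l ≠ 0 → ∀ x : Fin t → ℂ,
      eval (fun i => l ^ k i * x i) W = l ^ d * eval x W)
    (x : Fin t → ℂ) :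
    ∑ i, (k i : ℂ) * x i * eval x (pderiv i W) = (d : ℂ) * eval x W := by
  -- curve c i l = l ^ k i * x i
  have hc : ∀ i : Fin t, HasDerivAt (fun l : ℂ => l ^ k i * x i)
      ((k i : ℂ) * x i) 1 := by
    intro i
    have := ((hasDerivAt_pow (k i) (1 : ℂ)).mul_const (x i))
    simpa using this
  have hL : HasDerivAt (fun l : ℂ => eval (fun i => l ^ k i * x i) W)
      (∑ i, eval (fun i => (1:ℂ) ^ k i * x i) (pderiv i W) * ((k i : ℂ) * x i)) 1 := by
    have h2 : HasFDerivAt (fun l : ℂ => (fun i => l ^ k i * x i))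
        (ContinuousLinearMap.pi (fun i =>
          ContinuousLinearMap.smulRight (1 : ℂ →L[ℂ] ℂ) ((k i : ℂ) * x i))) 1 :=
      hasFDerivAt_pi.2 fun i => (hc i).hasFDerivAt
    have h1 := evalHasFDerivAt W (fun i => (1:ℂ) ^ k i * x i)
    have h3 := h1.comp (1 : ℂ) h2
    have h4 := h3.hasDerivAt
    refine h4.congr_deriv ?_
    simp [Finset.sum_apply, mul_comm]
  have hR : HasDerivAt (fun l : ℂ => l ^ d * eval x W) ((d : ℂ) * eval x W) 1 := by
    have := (hasDerivAt_pow d (1 : ℂ)).mul_const (eval x W)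
    simpa using this
  have hEq : (fun l : ℂ => eval (fun i => l ^ k i * x i) W)
      =ᶠ[nhds (1 : ℂ)] fun l : ℂ => l ^ d * eval x W := by
    filter_upwards [IsOpen.mem_nhds isOpen_compl_singleton (by simp : (1:ℂ) ∈ ({0}ᶜ : Set ℂ))]
      with l hl
    exact hW l hl x
  have := (hL.congr_of_eventuallyEq hEq.symm).unique hR
  rw [← this]
  refine Finset.sum_congr rfl fun i _ => ?_
  simp [mul_comm]

/-- Euler identity, polynomial form. -/
theorem eulerPoly {t d : ℕ} {k : Fin t → ℕ} {W : MvPolynomial (Fin t) ℂ}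
    (hW : ∀ l : ℂ, l ≠ 0 → ∀ x : Fin t → ℂ,
      eval (fun i => l ^ k i * x i) W = l ^ d * eval x W) :
    ∑ i, C ((k i : ℂ)) * X i * pderiv i W = C ((d : ℂ)) * W := by
  apply MvPolynomial.funext
  intro x
  have := eulerEval hW x
  simpa [eval_C, eval_X] using this

/-- Differentiated Euler identity, evaluated. -/
theorem eulerDiffEval {t d : ℕ} {k : Fin t → ℕ} {W : MvPolynomial (Fin t) ℂ}
    (hW : ∀ l : ℂ, l ≠ 0 → ∀ x : Fin t → ℂ,
      eval (fun i => l ^ k i * x i) W = l ^ d * eval x W)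
    (j : Fin t) (y : Fin t → ℂ) :
    ∑ i, (k i : ℂ) * y i * eval y (pderiv j (pderiv i W))
      = ((d : ℂ) - (k j : ℂ)) * eval y (pderiv j W) := by
  have h := congrArg (pderiv j) (eulerPoly hW)
  rw [map_sum] at h
  have hterm : ∀ i : Fin t, pderiv j (C ((k i : ℂ)) * X i * pderiv i W)
      = C ((k i : ℂ)) * X i * pderiv j (pderiv i W)
        + (if i = j then C ((k i : ℂ)) * pderiv i W else 0) := by
    intro i
    rw [pderiv_mul, pderiv_mul, pderiv_C]
    rcases eq_or_ne i j with h' | h'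
    · subst h'; simp [pderiv_X_self]; try ring
    · simp [pderiv_X_of_ne (Ne.symm h'), h']; try ring
  simp only [hterm, Finset.sum_add_distrib, Finset.sum_ite_eq' Finset.univ j,
    Finset.mem_univ, if_true] at h
  rw [pderiv_mul, pderiv_C] at h
  have := congrArg (eval y) h
  simp only [map_add, map_sum, eval_mul, eval_C, eval_X, zero_mul, add_zero, map_zero] at this ⊢
  rw [zero_add] at this
  linear_combination this

theorem normSqSumHasFDerivAt {t : ℕ} (φ : Fin t → ℂ → ℂ) (q : Fin t → ℝ) (w : ℂ)
    (hd : ∀ i, DifferentiableAt ℝ (φ i) w) :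
    HasFDerivAt (fun w => ∑ i, q i * ‖φ i w‖ ^ 2)
      (∑ i, ((2 * q i * (φ i w).re) • (Complex.reCLM.comp (fderiv ℝ (φ i) w))
        + (2 * q i * (φ i w).im) • (Complex.imCLM.comp (fderiv ℝ (φ i) w)))) w := by
  have hfun : (fun w => ∑ i, q i * ‖φ i w‖ ^ 2)
      = fun w => ∑ i, q i * ((φ i w).re * (φ i w).re + (φ i w).im * (φ i w).im) := by
    ext w
    refine Finset.sum_congr rfl fun i _ => ?_
    rw [Complex.sq_norm, Complex.normSq_apply]
  rw [hfun]
  have h : ∀ i ∈ Finset.univ, HasFDerivAt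
      (fun w => q i * ((φ i w).re * (φ i w).re + (φ i w).im * (φ i w).im))
      ((2 * q i * (φ i w).re) • (Complex.reCLM.comp (fderiv ℝ (φ i) w))
        + (2 * q i * (φ i w).im) • (Complex.imCLM.comp (fderiv ℝ (φ i) w))) w := by
    intro i _
    have hre : HasFDerivAt (fun w => (φ i w).re)
        (Complex.reCLM.comp (fderiv ℝ (φ i) w)) w :=
      (Complex.reCLM.hasFDerivAt).comp w (hd i).hasFDerivAt
    have him : HasFDerivAt (fun w => (φ i w).im)
        (Complex.imCLM.comp (fderiv ℝ (φ i) w)) w :=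
      (Complex.imCLM.hasFDerivAt).comp w (hd i).hasFDerivAt
    have := ((hre.mul hre).add (him.mul him)).const_mul (q i)
    refine this.congr_fderiv ?_
    ext v
    simp only [ContinuousLinearMap.add_apply, ContinuousLinearMap.smul_apply,
      ContinuousLinearMap.coe_smul', Pi.smul_apply, smul_eq_mul]
    ring
  exact HasFDerivAt.fun_sum h

/-- Scalar computation: combining the two Wirtinger mixed-derivative identities. -/
theorem ACcalc {t : ℕ} (A B B' Cc : ℂ) (u v Wr G : Fin t → ℂ)
    (h1 : B = Complex.I * A + 2 * Complex.I * (starRingEnd ℂ) (∑ j, Wr j * u j))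
    (h2 : Cc = Complex.I * B' + 2 * Complex.I * (starRingEnd ℂ) (∑ j, Wr j * v j))
    (hBB : B' = B)
    (hv : ∀ j, v j = Complex.I * u j + 2 * Complex.I * (starRingEnd ℂ) (G j)) :
    A + Cc = 4 * ∑ j, (starRingEnd ℂ) (Wr j) * G j := by
  have e1 : (starRingEnd ℂ) (∑ j, Wr j * u j)
      = ∑ j, (starRingEnd ℂ) (Wr j) * (starRingEnd ℂ) (u j) := by
    rw [map_sum]; exact Finset.sum_congr rfl fun j _ => map_mul _ _ _
  have e2 : (starRingEnd ℂ) (∑ j, Wr j * v j)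
      = ∑ j, (starRingEnd ℂ) (Wr j) *
          (-Complex.I * (starRingEnd ℂ) (u j) - 2 * Complex.I * G j) := by
    rw [map_sum]
    refine Finset.sum_congr rfl fun j _ => ?_
    rw [map_mul, hv j]
    congr 1
    simp only [map_add, map_mul, map_ofNat, Complex.conj_I, Complex.conj_conj]
    ring
  have e3 : ∑ j, (starRingEnd ℂ) (Wr j) *
        (-Complex.I * (starRingEnd ℂ) (u j) - 2 * Complex.I * G j)
      = -Complex.I * (∑ j, (starRingEnd ℂ) (Wr j) * (starRingEnd ℂ) (u j))
        - 2 * Complex.I * ∑ j, (starRingEnd ℂ) (Wr j) * G j := by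
    rw [Finset.mul_sum, Finset.mul_sum, ← Finset.sum_sub_distrib]
    exact Finset.sum_congr rfl fun j _ => by ring
  rw [h2, hBB, h1, e2, e3, e1]
  linear_combination (A - 4 * ∑ j, (starRingEnd ℂ) (Wr j) * G j) * Complex.I_sq

/-- Scalar computation: the Euler-identity part of the Laplacian. -/
theorem part2calc {t : ℕ} (d : ℕ) (hd : 0 < d) (k : Fin t → ℕ)
    (φz AC G : Fin t → ℂ) (Wr : Fin t → Fin t → ℂ)
    (hAC : ∀ i, AC i = 4 * ∑ j, (starRingEnd ℂ) (Wr i j) * G j)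
    (hE : ∀ j, ∑ i, (k i : ℂ) * φz i * Wr i j = ((d : ℂ) - (k j : ℂ)) * G j) :
    ∑ i, 2 * ((k i : ℝ) / d) * ((φz i).re * (AC i).re + (φz i).im * (AC i).im)
      = ∑ j, 8 * (1 - (k j : ℝ) / d) * ‖G j‖ ^ 2 := by
  have hdR : (d : ℝ) ≠ 0 := Nat.cast_ne_zero.2 hd.ne'
  have hdC : (d : ℂ) ≠ 0 := Nat.cast_ne_zero.2 hd.ne'
  have hterm : ∀ i, (((2 * ((k i : ℝ) / d) : ℝ) : ℂ)) * ((starRingEnd ℂ) (φz i) * AC i)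
      = ∑ j, (8 / (d : ℂ)) * ((starRingEnd ℂ) ((k i : ℂ) * φz i * Wr i j)) * G j := by
    intro i
    have h4 : AC i = ∑ j, 4 * ((starRingEnd ℂ) (Wr i j) * G j) := by
      rw [hAC i, Finset.mul_sum]
    rw [h4, Finset.mul_sum, Finset.mul_sum]
    refine Finset.sum_congr rfl fun j _ => ?_
    rw [map_mul, map_mul, map_natCast]
    push_cast
    field_simp
    ring
  have key : ∑ i, (((2 * ((k i : ℝ) / d) : ℝ) : ℂ)) * ((starRingEnd ℂ) (φz i) * AC i)
      = ∑ j, (((8 * (1 - (k j : ℝ) / d) : ℝ) : ℂ)) * ((starRingEnd ℂ) (G j) * G j) := by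
    rw [Finset.sum_congr rfl (fun i _ => hterm i), Finset.sum_comm]
    refine Finset.sum_congr rfl fun j _ => ?_
    have : ∑ i, (8 / (d : ℂ)) * ((starRingEnd ℂ) ((k i : ℂ) * φz i * Wr i j)) * G j
        = (8 / (d : ℂ)) * ((starRingEnd ℂ) (∑ i, (k i : ℂ) * φz i * Wr i j)) * G j := by
      rw [map_sum, Finset.mul_sum, Finset.sum_mul]
    rw [this, hE j, map_mul]
    have hc : (starRingEnd ℂ) ((d : ℂ) - (k j : ℂ)) = ((d : ℂ) - (k j : ℂ)) := by
      simp
    rw [hc]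
    push_cast
    field_simp
  have hre := congrArg Complex.re key
  rw [Complex.re_sum, Complex.re_sum] at hre
  calc ∑ i, 2 * ((k i : ℝ) / d) * ((φz i).re * (AC i).re + (φz i).im * (AC i).im)
      = ∑ i, ((((2 * ((k i : ℝ) / d) : ℝ) : ℂ)) * ((starRingEnd ℂ) (φz i) * AC i)).re := by
        refine Finset.sum_congr rfl fun i _ => ?_
        simp only [Complex.mul_re, Complex.conj_re, Complex.conj_im, Complex.ofReal_re,
          Complex.ofReal_im]
        ring
    _ = ∑ j, ((((8 * (1 - (k j : ℝ) / d) : ℝ) : ℂ)) * ((starRingEnd ℂ) (G j) * G j)).re := hre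
    _ = ∑ j, 8 * (1 - (k j : ℝ) / d) * ‖G j‖ ^ 2 := by
        refine Finset.sum_congr rfl fun j _ => ?_
        rw [Complex.sq_norm]
        simp only [Complex.mul_re, Complex.conj_re, Complex.conj_im, Complex.ofReal_re,
          Complex.ofReal_im, Complex.normSq_apply]
        ring

theorem parcalc (a b : ℂ) :
    ‖(a - Complex.I * b) / 2‖ ^ 2 + ‖(a + Complex.I * b) / 2‖ ^ 2
      = (a.re * a.re + a.im * a.im + (b.re * b.re + b.im * b.im)) / 2 := by
  rw [norm_div, norm_div, Complex.norm_two, div_pow, div_pow,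
    Complex.sq_norm, Complex.sq_norm]
  simp only [Complex.normSq_apply, Complex.sub_re, Complex.sub_im, Complex.add_re,
    Complex.add_im, Complex.mul_re, Complex.mul_im, Complex.I_re, Complex.I_im]
  ring

/-- The Laplacian `Δ = ∂_xx + ∂_yy = 4 ∂_z ∂_z̄` of a real function on `ℂ`. -/
noncomputable def lapOp (f : ℂ → ℝ) (z : ℂ) : ℝ :=
  fderiv ℝ (fun w => fderiv ℝ f w 1) z 1
    + fderiv ℝ (fun w => fderiv ℝ f w Complex.I) z Complex.I

/-- For smooth solutions `φ` of the `W`-spin system for a quasi-homogeneous `W` with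
weights `qᵢ = kᵢ/d`, the function `N(z) = ∑ᵢ qᵢ |φᵢ(z)|²` satisfies
`ΔN = ∑ᵢ 8(1−qᵢ)|∂W/∂xᵢ(φ)|² + ∑ᵢ 4qᵢ(|∂φᵢ|² + |∂̄φᵢ|²)`; in particular `ΔN ≥ 0`,
so `N` is subharmonic on `Ω`. -/
theorem laplacian_of_norm (t d : ℕ) (hd : 0 < d) (k : Fin t → ℕ)
    (hk : ∀ i, 0 < k i) (hkd : ∀ i, k i < d)
    (W : MvPolynomial (Fin t) ℂ)
    (hW : ∀ l : ℂ, l ≠ 0 → ∀ x : Fin t → ℂ,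
      eval (fun i => l ^ k i * x i) W = l ^ d * eval x W)
    (Ω : Set ℂ) (hΩ : IsOpen Ω) (φ : Fin t → ℂ → ℂ)
    (hφ : ∀ i, ContDiffOn ℝ (⊤ : ℕ∞) (φ i) Ω)
    (hsys : ∀ i, ∀ z ∈ Ω,
      dbarOp (φ i) z + starRingEnd ℂ (eval (fun j => φ j z) (pderiv i W)) = 0)
    (z : ℂ) (hz : z ∈ Ω) :
    lapOp (fun w => ∑ i, ((k i : ℝ) / d) * ‖φ i w‖ ^ 2) z
      = ∑ i, 8 * (1 - (k i : ℝ) / d)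
          * ‖eval (fun j => φ j z) (pderiv i W)‖ ^ 2
        + ∑ i, 4 * ((k i : ℝ) / d)
          * (‖dzOp (φ i) z‖ ^ 2 + ‖dbarOp (φ i) z‖ ^ 2) ∧
    0 ≤ lapOp (fun w => ∑ i, ((k i : ℝ) / d) * ‖φ i w‖ ^ 2) z := by
  have hmem : Ω ∈ nhds z := hΩ.mem_nhds hz
  have hC : ∀ i, ∀ w ∈ Ω, ContDiffAt ℝ (⊤ : ℕ∞) (φ i) w :=
    fun i w hw => (hφ i).contDiffAt (hΩ.mem_nhds hw)
  have hdiff : ∀ i, ∀ w ∈ Ω, DifferentiableAt ℝ (φ i) w :=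
    fun i w hw => (hC i w hw).differentiableAt (by simp)
  set g : Fin t → ℂ → ℂ := fun i w => eval (fun j => φ j w) (pderiv i W) with hgdef
  -- the system, solved for the `I`-derivative
  have hsys' : ∀ i, ∀ w ∈ Ω, fderiv ℝ (φ i) w Complex.I
      = Complex.I * fderiv ℝ (φ i) w 1
        + 2 * Complex.I * (starRingEnd ℂ) (g i w) := by
    intro i w hw
    have h0 := hsys i w hw
    unfold dbarOp at h0
    linear_combination (-2 * Complex.I) * h0
      + (fderiv ℝ (φ i) w Complex.I) * Complex.I_sq
  -- second derivative data at z
  have hfd : ∀ i, DifferentiableAt ℝ (fderiv ℝ (φ i)) z :=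
    fun i => ((hC i z hz).fderiv_right (m := (⊤ : ℕ∞)) (by simp)).differentiableAt (by simp)
  set f2 : Fin t → ℂ →L[ℝ] ℂ →L[ℝ] ℂ := fun i => fderiv ℝ (fderiv ℝ (φ i)) z with hf2def
  have happ : ∀ i (v : ℂ), HasFDerivAt (fun w => fderiv ℝ (φ i) w v)
      ((ContinuousLinearMap.apply ℝ ℂ v).comp (f2 i)) z :=
    fun i v => (ContinuousLinearMap.apply ℝ ℂ v).hasFDerivAt.comp z (hfd i).hasFDerivAt
  have hEv : ∀ i, ∀ᶠ w in nhds z, HasFDerivAt (φ i) (fderiv ℝ (φ i) w) w := by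
    intro i
    filter_upwards [hmem] with w hw using (hdiff i w hw).hasFDerivAt
  have hsymm : ∀ i, f2 i 1 Complex.I = f2 i Complex.I 1 := fun i =>
    second_derivative_symmetric_of_eventually (hEv i) (hfd i).hasFDerivAt 1 Complex.I
  -- derivative of g i at z
  have hgder : ∀ i, HasFDerivAt (g i)
      (∑ j, eval (fun j => φ j z) (pderiv j (pderiv i W)) • fderiv ℝ (φ j) z) z :=
    fun i => evalCompHasFDerivAt (pderiv i W) (fun j => (hdiff j z hz).hasFDerivAt)
  have hcgder : ∀ i, HasFDerivAt (fun w => (starRingEnd ℂ) (g i w))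
      ((Complex.conjCLE.toContinuousLinearMap).comp
        (∑ j, eval (fun j => φ j z) (pderiv j (pderiv i W)) • fderiv ℝ (φ j) z)) z :=
    fun i => (Complex.conjCLE.toContinuousLinearMap.hasFDerivAt).comp z (hgder i)
  -- mixed second-derivative identity
  have hmix : ∀ i (v : ℂ), f2 i v Complex.I = Complex.I * f2 i v 1
      + 2 * Complex.I * (starRingEnd ℂ)
          (∑ j, eval (fun j => φ j z) (pderiv j (pderiv i W)) * fderiv ℝ (φ j) z v) := by
    intro i v
    have hev : (fun w => fderiv ℝ (φ i) w Complex.I) =ᶠ[nhds z]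
        (fun w => Complex.I * fderiv ℝ (φ i) w 1
          + 2 * Complex.I * (starRingEnd ℂ) (g i w)) := by
      filter_upwards [hmem] with w hw using hsys' i w hw
    have hR : HasFDerivAt (fun w => Complex.I * fderiv ℝ (φ i) w 1
        + 2 * Complex.I * (starRingEnd ℂ) (g i w))
        (Complex.I • ((ContinuousLinearMap.apply ℝ ℂ 1).comp (f2 i))
          + (2 * Complex.I) • ((Complex.conjCLE.toContinuousLinearMap).comp
            (∑ j, eval (fun j => φ j z) (pderiv j (pderiv i W)) • fderiv ℝ (φ j) z))) z :=
      by
        refine HasFDerivAt.add ?_ ?_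
        · exact (happ i 1).const_mul Complex.I
        · exact (hcgder i).const_mul (2 * Complex.I)
    have heq := hev.fderiv_eq (𝕜 := ℝ)
    rw [(happ i Complex.I).fderiv, hR.fderiv] at heq
    have := congrArg (fun (M : ℂ →L[ℝ] ℂ) => M v) heq
    simpa [ContinuousLinearMap.smul_apply, ContinuousLinearMap.coe_sum',
      Finset.sum_apply, map_sum, smul_eq_mul] using this
  -- the Laplacian combination of second derivatives
  have hAC : ∀ i, f2 i 1 1 + f2 i Complex.I Complex.I
      = 4 * ∑ j, (starRingEnd ℂ) (eval (fun j => φ j z) (pderiv j (pderiv i W)))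
          * g j z := by
    intro i
    exact ACcalc (f2 i 1 1) (f2 i 1 Complex.I) (f2 i Complex.I 1) (f2 i Complex.I Complex.I)
      (fun j => fderiv ℝ (φ j) z 1) (fun j => fderiv ℝ (φ j) z Complex.I)
      (fun j => eval (fun j => φ j z) (pderiv j (pderiv i W)))
      (fun j => g j z)
      (hmix i 1) (hmix i Complex.I) (hsymm i).symm
      (fun j => hsys' j z hz)
  -- second derivatives of N in direction v
  have hlap : ∀ v : ℂ,
      fderiv ℝ (fun w => fderiv ℝ
          (fun w => ∑ i, ((k i : ℝ) / d) * ‖φ i w‖ ^ 2) w v) z v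
        = ∑ i, 2 * ((k i : ℝ) / d) *
            ((fderiv ℝ (φ i) z v).re * (fderiv ℝ (φ i) z v).re
              + (fderiv ℝ (φ i) z v).im * (fderiv ℝ (φ i) z v).im
              + (φ i z).re * (f2 i v v).re + (φ i z).im * (f2 i v v).im) := by
    intro v
    have hevF : (fun w => fderiv ℝ
        (fun w => ∑ i, ((k i : ℝ) / d) * ‖φ i w‖ ^ 2) w v)
        =ᶠ[nhds z] (fun w => ∑ i,
          (2 * ((k i : ℝ) / d) * (φ i w).re * (fderiv ℝ (φ i) w v).re
            + 2 * ((k i : ℝ) / d) * (φ i w).im * (fderiv ℝ (φ i) w v).im)) := by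
      filter_upwards [hmem] with w hw
      rw [(normSqSumHasFDerivAt φ (fun i => (k i : ℝ) / d) w (fun i => hdiff i w hw)).fderiv]
      simp only [ContinuousLinearMap.coe_sum', Finset.sum_apply,
        ContinuousLinearMap.add_apply, ContinuousLinearMap.coe_smul', Pi.smul_apply,
        ContinuousLinearMap.coe_comp', Function.comp_apply, smul_eq_mul,
        Complex.reCLM_apply, Complex.imCLM_apply]
      try exact Finset.sum_congr rfl fun i _ => by ring
    rw [hevF.fderiv_eq (𝕜 := ℝ)]
    have hterm : ∀ i ∈ Finset.univ, HasFDerivAt (fun w =>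
        2 * ((k i : ℝ) / d) * (φ i w).re * (fderiv ℝ (φ i) w v).re
          + 2 * ((k i : ℝ) / d) * (φ i w).im * (fderiv ℝ (φ i) w v).im)
        (((2 * ((k i : ℝ) / d) * (φ i z).re) •
            (Complex.reCLM.comp ((ContinuousLinearMap.apply ℝ ℂ v).comp (f2 i)))
          + (fderiv ℝ (φ i) z v).re •
            ((2 * ((k i : ℝ) / d)) • (Complex.reCLM.comp (fderiv ℝ (φ i) z))))
          + ((2 * ((k i : ℝ) / d) * (φ i z).im) •
            (Complex.imCLM.comp ((ContinuousLinearMap.apply ℝ ℂ v).comp (f2 i)))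
          + (fderiv ℝ (φ i) z v).im •
            ((2 * ((k i : ℝ) / d)) • (Complex.imCLM.comp (fderiv ℝ (φ i) z))))) z := by
      intro i _
      have hre : HasFDerivAt (fun w => (φ i w).re)
          (Complex.reCLM.comp (fderiv ℝ (φ i) z)) z :=
        (Complex.reCLM.hasFDerivAt).comp z (hdiff i z hz).hasFDerivAt
      have him : HasFDerivAt (fun w => (φ i w).im)
          (Complex.imCLM.comp (fderiv ℝ (φ i) z)) z :=
        (Complex.imCLM.hasFDerivAt).comp z (hdiff i z hz).hasFDerivAt
      have hrev : HasFDerivAt (fun w => (fderiv ℝ (φ i) w v).re)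
          (Complex.reCLM.comp ((ContinuousLinearMap.apply ℝ ℂ v).comp (f2 i))) z :=
        (Complex.reCLM.hasFDerivAt).comp z (happ i v)
      have himv : HasFDerivAt (fun w => (fderiv ℝ (φ i) w v).im)
          (Complex.imCLM.comp ((ContinuousLinearMap.apply ℝ ℂ v).comp (f2 i))) z :=
        (Complex.imCLM.hasFDerivAt).comp z (happ i v)
      exact ((hre.const_mul (2 * ((k i : ℝ) / d))).mul hrev).add
        ((him.const_mul (2 * ((k i : ℝ) / d))).mul himv)
    rw [(HasFDerivAt.fun_sum hterm).fderiv]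
    simp only [ContinuousLinearMap.coe_sum', Finset.sum_apply,
      ContinuousLinearMap.add_apply, ContinuousLinearMap.coe_smul', Pi.smul_apply,
      ContinuousLinearMap.coe_comp', Function.comp_apply,
      ContinuousLinearMap.apply_apply, smul_eq_mul,
      Complex.reCLM_apply, Complex.imCLM_apply]
    try exact Finset.sum_congr rfl fun i _ => by ring
  -- assemble
  have hmain : lapOp (fun w => ∑ i, ((k i : ℝ) / d) * ‖φ i w‖ ^ 2) z
      = ∑ i, 8 * (1 - (k i : ℝ) / d)
          * ‖eval (fun j => φ j z) (pderiv i W)‖ ^ 2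
        + ∑ i, 4 * ((k i : ℝ) / d)
          * (‖dzOp (φ i) z‖ ^ 2 + ‖dbarOp (φ i) z‖ ^ 2) := by
    unfold lapOp
    rw [hlap 1, hlap Complex.I, ← Finset.sum_add_distrib]
    have hper : ∀ i : Fin t,
        2 * ((k i : ℝ) / d) *
            ((fderiv ℝ (φ i) z 1).re * (fderiv ℝ (φ i) z 1).re
              + (fderiv ℝ (φ i) z 1).im * (fderiv ℝ (φ i) z 1).im
              + (φ i z).re * (f2 i 1 1).re + (φ i z).im * (f2 i 1 1).im)
          + 2 * ((k i : ℝ) / d) *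
            ((fderiv ℝ (φ i) z Complex.I).re * (fderiv ℝ (φ i) z Complex.I).re
              + (fderiv ℝ (φ i) z Complex.I).im * (fderiv ℝ (φ i) z Complex.I).im
              + (φ i z).re * (f2 i Complex.I Complex.I).re
              + (φ i z).im * (f2 i Complex.I Complex.I).im)
        = 4 * ((k i : ℝ) / d)
            * (‖dzOp (φ i) z‖ ^ 2 + ‖dbarOp (φ i) z‖ ^ 2)
          + 2 * ((k i : ℝ) / d) *
            ((φ i z).re * (f2 i 1 1 + f2 i Complex.I Complex.I).re
              + (φ i z).im * (f2 i 1 1 + f2 i Complex.I Complex.I).im) := by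
      intro i
      unfold dzOp dbarOp
      rw [parcalc (fderiv ℝ (φ i) z 1) (fderiv ℝ (φ i) z Complex.I)]
      simp only [Complex.add_re, Complex.add_im]
      ring
    rw [Finset.sum_congr rfl fun i _ => hper i, Finset.sum_add_distrib]
    have h2 := part2calc d hd k (fun i => φ i z)
      (fun i => f2 i 1 1 + f2 i Complex.I Complex.I)
      (fun j => g j z)
      (fun i j => eval (fun j => φ j z) (pderiv j (pderiv i W)))
      (fun i => hAC i)
      (fun j => eulerDiffEval hW j (fun j => φ j z))
    rw [h2, add_comm]
  refine ⟨hmain, ?_⟩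
  rw [hmain]
  have hd' : (0:ℝ) < d := by exact_mod_cast hd
  apply add_nonneg <;> refine Finset.sum_nonneg fun i _ => ?_
  · apply mul_nonneg
    · apply mul_nonneg (by norm_num)
      rw [sub_nonneg]
      rw [div_le_one hd']
      exact_mod_cast (hkd i).le
    · positivity
  · apply mul_nonneg
    · positivity
    · positivity
end
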